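/- Let H : [0,∞) → [a,b] ⊂ (1/2,1) be measurable and fix t > 0. Then there exist constants 0 < c < C and h_0 > 0 such that for all h ≥ h_0, c · (t+h)^{2H_{t+h}−1} ≤ R_H(t+h, t) ≤ C · (t+h)^{2H_{t+h}−1}. -/

import Mathlib

open MeasureTheory Set Filter

/-- The Beta function `β(x,y) = Γ(x)Γ(y)/Γ(x+y)`. -/
noncomputable def Beta (x y : ℝ) : ℝ := Real.Gamma x * Real.Gamma y / Real.Gamma (x + y)

/-- The normalizing constant `c_H = (H(2H−1)/β(2−2H, H−1/2))^{1/2}`. -/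
noncomputable def cH (H : ℝ) : ℝ := Real.sqrt (H * (2 * H - 1) / Beta (2 - 2 * H) (H - 1 / 2))

/-- The kernel `K_H(t,s)`; equal to
`c_{H_t} s^{1/2−H_t} ∫_s^t (u−s)^{H_t−3/2} u^{H_t−1/2} du` for `s ≤ t` and `0` for `s > t`. -/
noncomputable def KH (H : ℝ → ℝ) (t s : ℝ) : ℝ :=
  if s ≤ t then
    cH (H t) * s ^ ((1 : ℝ) / 2 - H t) *
      ∫ u in s..t, (u - s) ^ (H t - 3 / 2) * u ^ (H t - 1 / 2)
  else 0

/-- The covariance function `R_H(t,s) = ∫_0^{min(s,t)} K_H(t,u) K_H(s,u) du`. -/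
noncomputable def RH (H : ℝ → ℝ) (t s : ℝ) : ℝ :=
  ∫ u in (0 : ℝ)..(min s t), KH H t u * KH H s u

/-!
The inner integral `∫_u^S (v−u)^{h−3/2} v^{h−1/2} dv` of `K_H(S,u)` is at most
`S^{2h−1}/(h−1/2)` (bound `v ≤ S`), and for `2u ≤ S` at least
`(1 − 2^{1−2h}) S^{2h−1}` (bound `v − u ≤ v`). Since `c_H` is continuous and positive on `[a,b]`, this gives
`K_H(T,u) ≍ u^{1/2−H_T} T^{2H_T−1}` uniformly in `T`. For fixed `t` the factor `K_H(t,u)` is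
`O(u^{1/2−H_t})` and at least `c_{H_t}(t−u)^{H_t−1/2}`, so integrating over `(0,t]` for the
upper bound and over `(0,t/2]` for the lower one yields `R_H(T,t) ≍ T^{2H_T−1}` for `T ≥ 2t`.
-/

lemma Beta_pos {x y : ℝ} (hx : 0 < x) (hy : 0 < y) : 0 < Beta x y :=
  div_pos (mul_pos (Real.Gamma_pos_of_pos hx) (Real.Gamma_pos_of_pos hy))
    (Real.Gamma_pos_of_pos (add_pos hx hy))

lemma cH_pos {x : ℝ} (h₁ : 1 / 2 < x) (h₂ : x < 1) : 0 < cH x :=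
  Real.sqrt_pos.mpr <| div_pos (by nlinarith) (Beta_pos (by linarith) (by linarith))

lemma continuousOn_cH : ContinuousOn cH (Ioo (1 / 2) 1) := by
  have hΓ : ∀ f : ℝ → ℝ, Continuous f → MapsTo f (Ioo (1 / 2) 1) (Ioi 0) →
      ContinuousOn (fun x => Real.Gamma (f x)) (Ioo (1 / 2) 1) := fun f hf hmaps =>
    Real.differentiableOn_Gamma_Ioi.continuousOn.comp hf.continuousOn hmaps
  have hB : ContinuousOn (fun x : ℝ => Beta (2 - 2 * x) (x - 1 / 2)) (Ioo (1 / 2) 1) := by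
    refine ((hΓ _ (by fun_prop) ?_).mul (hΓ _ (by fun_prop) ?_)).div (hΓ _ (by fun_prop) ?_) ?_
    all_goals intro x hx; simp only [mem_Ioo, mem_Ioi] at hx ⊢
    all_goals first | linarith [hx.1, hx.2] | exact (Real.Gamma_pos_of_pos (by linarith)).ne'
  refine Real.continuous_sqrt.comp_continuousOn ((by fun_prop : Continuous fun x : ℝ =>
    x * (2 * x - 1)).continuousOn.div hB fun x hx => (Beta_pos ?_ ?_).ne')
  all_goals linarith [hx.1, hx.2]

lemma exists_cH_div_le {a b : ℝ} (ha : 1 / 2 < a) (hb : b < 1) :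
    ∃ A, ∀ x ∈ Icc a b, cH x / (x - 1 / 2) ≤ A := by
  obtain ⟨A, hA⟩ := isCompact_Icc.exists_bound_of_continuousOn <|
    (continuousOn_cH.mono (Icc_subset_Ioo ha hb)).div (g := fun x => x - 1 / 2)
      (by fun_prop) fun x hx => by linarith [hx.1]
  exact ⟨A, fun x hx => (le_abs_self _).trans (hA x hx)⟩

lemma exists_pos_le_cH_mul {a b : ℝ} (ha : 1 / 2 < a) (hb : b < 1) {r : ℝ} (hr : 0 < r) :
    ∃ c > 0, ∀ x ∈ Icc a b, c ≤ cH x * (1 - 2 ^ (1 - 2 * x)) * r ^ (1 / 2 - x) := by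
  have hsub := Icc_subset_Ioo ha hb
  refine isCompact_Icc.exists_forall_le' ?_ fun x hx => ?_
  · refine ((continuousOn_cH.mono hsub).mul ?_).mul ?_
    · exact (continuous_const.sub (continuous_const.rpow (by fun_prop)
        fun _ => Or.inl two_ne_zero)).continuousOn
    · exact (continuous_const.rpow (by fun_prop) fun _ => Or.inl hr.ne').continuousOn
  · have hx' := hsub hx
    have h2 : (2 : ℝ) ^ (1 - 2 * x) < 1 :=
      Real.rpow_lt_one_of_one_lt_of_neg one_lt_two (by linarith [hx'.1])
    exact mul_pos (mul_pos (cH_pos hx'.1 hx'.2) (by linarith)) (Real.rpow_pos_of_pos hr _)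

lemma measurable_intervalIntegral_of_uncurry {f : ℝ → ℝ → ℝ}
    (hf : Measurable (Function.uncurry f)) {α β : ℝ → ℝ} (hα : Measurable α)
    (hβ : Measurable β) :
    Measurable fun u => ∫ v in α u..β u, f u v := by
  have hIoc : ∀ {α β : ℝ → ℝ}, Measurable α → Measurable β →
      Measurable fun u => ∫ v in Ioc (α u) (β u), f u v := by
    intro α β hα hβ
    have hs : MeasurableSet {p : ℝ × ℝ | p.2 ∈ Ioc (α p.1) (β p.1)} :=
      (measurableSet_lt (hα.comp measurable_fst) measurable_snd).inter
        (measurableSet_le measurable_snd (hβ.comp measurable_fst))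
    convert ((hf.indicator hs).stronglyMeasurable.integral_prod_right'
      (ν := (volume : Measure ℝ))).measurable using 2 with u
    rw [← integral_indicator measurableSet_Ioc]
    rfl
  exact (hIoc hα hβ).sub (hIoc hβ hα)

lemma measurable_KH (H : ℝ → ℝ) (S : ℝ) : Measurable (KH H S) := by
  refine Measurable.ite (measurableSet_le measurable_id measurable_const) ?_ measurable_const
  refine (measurable_const.mul (by fun_prop)).mul ?_
  exact measurable_intervalIntegral_of_uncurry (by fun_prop) measurable_id measurable_const

lemma KH_nonneg (H : ℝ → ℝ) (S : ℝ) {u : ℝ} (hu : 0 ≤ u) : 0 ≤ KH H S u := by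
  unfold KH
  split_ifs with huS
  · refine mul_nonneg (mul_nonneg (Real.sqrt_nonneg _) (Real.rpow_nonneg hu _)) ?_
    refine intervalIntegral.integral_nonneg huS fun v hv => ?_
    exact mul_nonneg (Real.rpow_nonneg (sub_nonneg.mpr hv.1) _) (Real.rpow_nonneg (hu.trans hv.1) _)
  · exact le_rfl

section KernelIntegral

variable {u S h : ℝ}

lemma intervalIntegrable_sub_rpow {p : ℝ} (hp : -1 < p) :
    IntervalIntegrable (fun v => (v - u) ^ p) volume u S := by
  simpa using (intervalIntegral.intervalIntegrable_rpow' (a := 0) (b := S - u) hp).comp_sub_right u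

lemma intervalIntegrable_sub_rpow_mul_rpow (hu : 0 < u) (huS : u ≤ S) (hh : 1 / 2 < h) :
    IntervalIntegrable (fun v => (v - u) ^ (h - 3 / 2) * v ^ (h - 1 / 2)) volume u S := by
  refine (intervalIntegrable_sub_rpow (by linarith)).mul_continuousOn fun v hv => ?_
  rw [uIcc_of_le huS] at hv
  exact (Real.continuousAt_rpow_const v _ (Or.inl (hu.trans_le hv.1).ne')).continuousWithinAt

lemma integral_sub_rpow {p : ℝ} (hp : -1 < p) :
    ∫ v in u..S, (v - u) ^ p = (S - u) ^ (p + 1) / (p + 1) := by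
  rw [intervalIntegral.integral_comp_sub_right (· ^ p), integral_rpow (Or.inl hp), sub_self,
    Real.zero_rpow (by linarith), sub_zero]

lemma integral_sub_rpow_mul_rpow_le (hu : 0 < u) (huS : u ≤ S) (hh : 1 / 2 < h) :
    ∫ v in u..S, (v - u) ^ (h - 3 / 2) * v ^ (h - 1 / 2) ≤ S ^ (2 * h - 1) / (h - 1 / 2) := by
  have hS : 0 < S := hu.trans_le huS
  have hp : -1 < h - 3 / 2 := by linarith
  calc ∫ v in u..S, (v - u) ^ (h - 3 / 2) * v ^ (h - 1 / 2)
      ≤ ∫ v in u..S, (v - u) ^ (h - 3 / 2) * S ^ (h - 1 / 2) := by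
        refine intervalIntegral.integral_mono_on huS
          (intervalIntegrable_sub_rpow_mul_rpow hu huS hh) ?_ fun v hv => ?_
        · exact (intervalIntegrable_sub_rpow hp).mul_const _
        · exact mul_le_mul_of_nonneg_left (Real.rpow_le_rpow (hu.le.trans hv.1) hv.2 (by linarith))
            (Real.rpow_nonneg (sub_nonneg.mpr hv.1) _)
    _ = (S - u) ^ (h - 1 / 2) * S ^ (h - 1 / 2) / (h - 1 / 2) := by
        rw [intervalIntegral.integral_mul_const, integral_sub_rpow hp]
        ring_nf
    _ ≤ S ^ (h - 1 / 2) * S ^ (h - 1 / 2) / (h - 1 / 2) := by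
        gcongr
        linarith
    _ = S ^ (2 * h - 1) / (h - 1 / 2) := by
        rw [← Real.rpow_add hS]
        ring_nf

lemma sub_rpow_div_le_integral_sub_rpow_mul_rpow (hu : 0 < u) (huS : u ≤ S) (hh : 1 / 2 < h)
    (hh' : h ≤ 3 / 2) :
    (S ^ (2 * h - 1) - u ^ (2 * h - 1)) / (2 * h - 1)
      ≤ ∫ v in u..S, (v - u) ^ (h - 3 / 2) * v ^ (h - 1 / 2) := by
  have hr : -1 < 2 * h - 2 := by linarith
  calc (S ^ (2 * h - 1) - u ^ (2 * h - 1)) / (2 * h - 1) = ∫ v in u..S, v ^ (2 * h - 2) := by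
        rw [integral_rpow (Or.inl hr)]
        ring_nf
    _ ≤ _ := by
        refine intervalIntegral.integral_mono_on_of_le_Ioo huS
          (intervalIntegral.intervalIntegrable_rpow' hr)
          (intervalIntegrable_sub_rpow_mul_rpow hu huS hh) fun v hv => ?_
        have hv0 : 0 < v := hu.trans hv.1
        calc v ^ (2 * h - 2) = v ^ (h - 3 / 2) * v ^ (h - 1 / 2) := by
              rw [← Real.rpow_add hv0]
              ring_nf
          _ ≤ (v - u) ^ (h - 3 / 2) * v ^ (h - 1 / 2) := by
              exact mul_le_mul_of_nonneg_right (Real.rpow_le_rpow_of_nonpos (sub_pos.mpr hv.1)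
                (sub_le_self _ hu.le) (by linarith)) (Real.rpow_nonneg hv0.le _)

lemma rpow_mul_sub_rpow_le_integral_sub_rpow_mul_rpow (hu : 0 < u) (huS : u < S)
    (hh : 1 / 2 < h) (hh' : h ≤ 3 / 2) :
    u ^ (h - 1 / 2) * (S - u) ^ (h - 1 / 2)
      ≤ ∫ v in u..S, (v - u) ^ (h - 3 / 2) * v ^ (h - 1 / 2) := by
  calc u ^ (h - 1 / 2) * (S - u) ^ (h - 1 / 2)
      = ∫ _ in u..S, (S - u) ^ (h - 3 / 2) * u ^ (h - 1 / 2) := by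
        rw [intervalIntegral.integral_const, smul_eq_mul,
          show h - 1 / 2 = 1 + (h - 3 / 2) by ring, Real.rpow_add (sub_pos.mpr huS),
          Real.rpow_one]
        ring
    _ ≤ _ := by
        refine intervalIntegral.integral_mono_on_of_le_Ioo huS.le intervalIntegrable_const
          (intervalIntegrable_sub_rpow_mul_rpow hu huS.le hh) fun v hv => ?_
        exact mul_le_mul (Real.rpow_le_rpow_of_nonpos (sub_pos.mpr hv.1) (by linarith [hv.2])
          (by linarith)) (Real.rpow_le_rpow hu.le hv.1.le (by linarith))
          (Real.rpow_nonneg hu.le _) (Real.rpow_nonneg (sub_nonneg.mpr hv.1.le) _)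

end KernelIntegral

section KernelBounds

variable {H : ℝ → ℝ} {S u : ℝ}

lemma KH_le (hu : 0 < u) (huS : u ≤ S) (hH : 1 / 2 < H S) :
    KH H S u ≤ cH (H S) / (H S - 1 / 2) * S ^ (2 * H S - 1) * u ^ (1 / 2 - H S) := by
  rw [KH, if_pos huS]
  calc cH (H S) * u ^ (1 / 2 - H S) * ∫ v in u..S, (v - u) ^ (H S - 3 / 2) * v ^ (H S - 1 / 2)
      ≤ cH (H S) * u ^ (1 / 2 - H S) * (S ^ (2 * H S - 1) / (H S - 1 / 2)) :=
        mul_le_mul_of_nonneg_left (integral_sub_rpow_mul_rpow_le hu huS hH)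
          (mul_nonneg (Real.sqrt_nonneg _) (Real.rpow_nonneg hu.le _))
    _ = _ := by ring

lemma le_KH_of_two_mul_le (hu : 0 < u) (h2u : 2 * u ≤ S) (hH : 1 / 2 < H S) (hH' : H S ≤ 1) :
    cH (H S) * (1 - 2 ^ (1 - 2 * H S)) * u ^ (1 / 2 - H S) * S ^ (2 * H S - 1) ≤ KH H S u := by
  have hS : 0 < S := by linarith
  have he : 0 < 2 * H S - 1 := by linarith
  rw [KH, if_pos (by linarith)]
  have hu_pow : u ^ (2 * H S - 1) ≤ S ^ (2 * H S - 1) * 2 ^ (1 - 2 * H S) := by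
    calc u ^ (2 * H S - 1) ≤ (S / 2) ^ (2 * H S - 1) := by gcongr; linarith
      _ = S ^ (2 * H S - 1) * 2 ^ (1 - 2 * H S) := by
        rw [Real.div_rpow hS.le zero_le_two, div_eq_mul_inv, ← Real.rpow_neg zero_le_two, neg_sub]
  have hinner : S ^ (2 * H S - 1) * (1 - 2 ^ (1 - 2 * H S))
      ≤ ∫ v in u..S, (v - u) ^ (H S - 3 / 2) * v ^ (H S - 1 / 2) := by
    refine le_trans ?_
      (sub_rpow_div_le_integral_sub_rpow_mul_rpow hu (by linarith) hH (by linarith))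
    rw [le_div_iff₀ he]
    have hdiff : 0 ≤ S ^ (2 * H S - 1) - u ^ (2 * H S - 1) := by
      have := Real.rpow_le_rpow hu.le (show u ≤ S by linarith) he.le
      linarith
    nlinarith
  calc cH (H S) * (1 - 2 ^ (1 - 2 * H S)) * u ^ (1 / 2 - H S) * S ^ (2 * H S - 1)
      = cH (H S) * u ^ (1 / 2 - H S) * (S ^ (2 * H S - 1) * (1 - 2 ^ (1 - 2 * H S))) := by ring
    _ ≤ _ := mul_le_mul_of_nonneg_left hinner
          (mul_nonneg (Real.sqrt_nonneg _) (Real.rpow_nonneg hu.le _))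

lemma le_KH (hu : 0 < u) (huS : u < S) (hH : 1 / 2 < H S) (hH' : H S ≤ 3 / 2) :
    cH (H S) * (S - u) ^ (H S - 1 / 2) ≤ KH H S u := by
  rw [KH, if_pos huS.le]
  calc cH (H S) * (S - u) ^ (H S - 1 / 2)
      = cH (H S) * u ^ (1 / 2 - H S) * (u ^ (H S - 1 / 2) * (S - u) ^ (H S - 1 / 2)) := by
        rw [mul_assoc (cH _), ← mul_assoc (u ^ _), ← Real.rpow_add hu,
          show 1 / 2 - H S + (H S - 1 / 2) = 0 by ring, Real.rpow_zero, one_mul]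
    _ ≤ _ := mul_le_mul_of_nonneg_left
          (rpow_mul_sub_rpow_le_integral_sub_rpow_mul_rpow hu huS hH hH')
          (mul_nonneg (Real.sqrt_nonneg _) (Real.rpow_nonneg hu.le _))

end KernelBounds

lemma rpow_le_rpow_add_rpow {u p q x : ℝ} (hu : 0 < u) (hp : p ≤ x) (hq : x ≤ q) :
    u ^ x ≤ u ^ p + u ^ q := by
  rcases le_total u 1 with h | h
  · linarith [Real.rpow_le_rpow_of_exponent_ge hu h hp, Real.rpow_nonneg hu.le q]
  · linarith [Real.rpow_le_rpow_of_exponent_le h hq, Real.rpow_nonneg hu.le p]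

section Covariance

variable {H : ℝ → ℝ} {t T : ℝ}

lemma RH_eq_setIntegral (ht : 0 ≤ t) (htT : t ≤ T) :
    RH H T t = ∫ u in Ioc 0 t, KH H T u * KH H t u := by
  rw [RH, min_eq_left htT, intervalIntegral.integral_of_le ht]

lemma KH_mul_KH_le {u : ℝ} (hu : u ∈ Ioc 0 t) (htT : t ≤ T) (hHT : 1 / 2 < H T)
    (hHt : 1 / 2 < H t) :
    KH H T u * KH H t u ≤ cH (H T) / (H T - 1 / 2) * T ^ (2 * H T - 1) *
      (cH (H t) / (H t - 1 / 2) * t ^ (2 * H t - 1)) * u ^ (1 - H T - H t) := by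
  calc KH H T u * KH H t u
      ≤ cH (H T) / (H T - 1 / 2) * T ^ (2 * H T - 1) * u ^ (1 / 2 - H T) *
          (cH (H t) / (H t - 1 / 2) * t ^ (2 * H t - 1) * u ^ (1 / 2 - H t)) :=
        mul_le_mul (KH_le hu.1 (hu.2.trans htT) hHT) (KH_le hu.1 hu.2 hHt)
          (KH_nonneg H t hu.1.le)
          (mul_nonneg (mul_nonneg (div_nonneg (Real.sqrt_nonneg _) (by linarith))
            (Real.rpow_nonneg (by linarith [hu.1, hu.2]) _)) (Real.rpow_nonneg hu.1.le _))
    _ = _ := by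
        rw [show 1 - H T - H t = 1 / 2 - H T + (1 / 2 - H t) by ring, Real.rpow_add hu.1]
        ring

lemma integrableOn_KH_mul_KH (ht : 0 < t) (htT : t ≤ T) (hHT : 1 / 2 < H T)
    (hHt : 1 / 2 < H t) (hsum : H T + H t < 2) :
    IntegrableOn (fun u => KH H T u * KH H t u) (Ioc 0 t) := by
  have hpow : IntegrableOn (fun u : ℝ => u ^ (1 - H T - H t)) (Ioc 0 t) :=
    (intervalIntegrable_iff_integrableOn_Ioc_of_le ht.le).mp
      (intervalIntegral.intervalIntegrable_rpow' (by linarith))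
  refine (hpow.const_mul _).mono' ((measurable_KH H T).mul (measurable_KH H t)).aestronglyMeasurable
    (by
      filter_upwards [ae_restrict_mem measurableSet_Ioc] with u hu
      rw [Real.norm_of_nonneg (mul_nonneg (KH_nonneg H T hu.1.le) (KH_nonneg H t hu.1.le))]
      exact KH_mul_KH_le hu htT hHT hHt)

end Covariance

section Asymptotics

variable {a b : ℝ} {H : ℝ → ℝ} {t : ℝ}

lemma exists_RH_le (ha : 1 / 2 < a) (hb : b < 1) (ht : 0 < t) (hHt : H t ∈ Icc a b) :
    ∃ C, ∀ T, t ≤ T → H T ∈ Icc a b → RH H T t ≤ C * T ^ (2 * H T - 1) := by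
  obtain ⟨A, hA⟩ := exists_cH_div_le ha hb
  set B := cH (H t) / (H t - 1 / 2) * t ^ (2 * H t - 1)
  have hB : 0 ≤ B := mul_nonneg (div_nonneg (Real.sqrt_nonneg _) (by linarith [hHt.1]))
    (Real.rpow_nonneg ht.le _)
  set Φ : ℝ → ℝ := fun u => u ^ (1 - b - H t) + u ^ (1 - a - H t)
  have hΦ : IntegrableOn Φ (Ioc 0 t) := by
    refine (intervalIntegrable_iff_integrableOn_Ioc_of_le ht.le).mp (.add ?_ ?_) <;>
      exact intervalIntegral.intervalIntegrable_rpow' (by linarith [hHt.1, hHt.2])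
  refine ⟨A * B * ∫ u in Ioc 0 t, Φ u, fun T htT hHT => ?_⟩
  have hAT : 0 ≤ cH (H T) / (H T - 1 / 2) := div_nonneg (Real.sqrt_nonneg _) (by linarith [hHT.1])
  have hTe : 0 ≤ T ^ (2 * H T - 1) := Real.rpow_nonneg (ht.le.trans htT) _
  rw [RH_eq_setIntegral ht.le htT]
  calc ∫ u in Ioc 0 t, KH H T u * KH H t u
      ≤ ∫ u in Ioc 0 t, A * T ^ (2 * H T - 1) * B * Φ u := by
        refine integral_mono_of_nonneg ?_ (hΦ.const_mul _) ?_
        all_goals filter_upwards [ae_restrict_mem measurableSet_Ioc] with u hu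
        · exact mul_nonneg (KH_nonneg H T hu.1.le) (KH_nonneg H t hu.1.le)
        · refine (KH_mul_KH_le hu htT (by linarith [hHT.1]) (by linarith [hHt.1])).trans ?_
          have hpow : u ^ (1 - H T - H t) ≤ Φ u :=
            rpow_le_rpow_add_rpow hu.1 (by linarith [hHT.2]) (by linarith [hHT.1])
          exact mul_le_mul (by gcongr; exact hA _ hHT) hpow (Real.rpow_nonneg hu.1.le _)
            (mul_nonneg (mul_nonneg (hAT.trans (hA _ hHT)) hTe) hB)
    _ = A * B * (∫ u in Ioc 0 t, Φ u) * T ^ (2 * H T - 1) := by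
        rw [integral_const_mul]
        ring

lemma exists_pos_le_KH (ha : 1 / 2 < a) (hb : b < 1) {r : ℝ} (hr : 0 < r) :
    ∃ c > 0, ∀ S u, 0 < u → u ≤ r → 2 * r ≤ S → H S ∈ Icc a b →
      c * S ^ (2 * H S - 1) ≤ KH H S u := by
  obtain ⟨c, hc, hc_le⟩ := exists_pos_le_cH_mul ha hb hr
  refine ⟨c, hc, fun S u hu hur hrS hHS => ?_⟩
  have hHS' : H S ∈ Ioo (1 / 2) 1 := Icc_subset_Ioo ha hb hHS
  have hSe : 0 ≤ S ^ (2 * H S - 1) := Real.rpow_nonneg (by linarith) _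
  have hcoef : 0 ≤ cH (H S) * (1 - 2 ^ (1 - 2 * H S)) :=
    mul_nonneg (Real.sqrt_nonneg _) (sub_nonneg.mpr
      (Real.rpow_le_one_of_one_le_of_nonpos one_le_two (by linarith [hHS'.1])))
  calc c * S ^ (2 * H S - 1)
      ≤ cH (H S) * (1 - 2 ^ (1 - 2 * H S)) * r ^ (1 / 2 - H S) * S ^ (2 * H S - 1) :=
        mul_le_mul_of_nonneg_right (hc_le _ hHS) hSe
    _ ≤ cH (H S) * (1 - 2 ^ (1 - 2 * H S)) * u ^ (1 / 2 - H S) * S ^ (2 * H S - 1) :=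
        mul_le_mul_of_nonneg_right (mul_le_mul_of_nonneg_left
          (Real.rpow_le_rpow_of_nonpos hu hur (by linarith [hHS'.1])) hcoef) hSe
    _ ≤ KH H S u := le_KH_of_two_mul_le hu (by linarith) hHS'.1 hHS'.2.le

lemma exists_pos_le_RH (ha : 1 / 2 < a) (hb : b < 1) (ht : 0 < t) (hHt : H t ∈ Icc a b) :
    ∃ c > 0, ∀ T, 2 * t ≤ T → H T ∈ Icc a b → c * T ^ (2 * H T - 1) ≤ RH H T t := by
  obtain ⟨c₁, hc₁, hc₁_le⟩ := exists_pos_le_KH ha hb (half_pos ht)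
  have hHt' : H t ∈ Ioo (1 / 2) 1 := Icc_subset_Ioo ha hb hHt
  set c₂ := cH (H t) * (t / 2) ^ (H t - 1 / 2)
  have hc₂ : 0 < c₂ := mul_pos (cH_pos hHt'.1 hHt'.2) (Real.rpow_pos_of_pos (half_pos ht) _)
  refine ⟨c₁ * c₂ * (t / 2), by positivity, fun T h2tT hHT => ?_⟩
  have hHT' : H T ∈ Ioo (1 / 2) 1 := Icc_subset_Ioo ha hb hHT
  have htT : t ≤ T := by linarith
  have hlow : ∀ u ∈ Ioc 0 (t / 2), c₁ * T ^ (2 * H T - 1) * c₂ ≤ KH H T u * KH H t u := by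
    intro u hu
    have hnear : c₂ ≤ KH H t u :=
      (mul_le_mul_of_nonneg_left
        (Real.rpow_le_rpow (by linarith) (by linarith [hu.2]) (by linarith [hHt'.1]))
        (Real.sqrt_nonneg _)).trans
      (le_KH hu.1 (by linarith [hu.2]) hHt'.1 (by linarith [hHt'.2]))
    exact mul_le_mul (hc₁_le T u hu.1 hu.2 (by linarith) hHT) hnear hc₂.le
      (KH_nonneg H T hu.1.le)
  have hint := integrableOn_KH_mul_KH ht htT hHT'.1 hHt'.1 (by linarith [hHT'.2, hHt'.2])
  rw [RH_eq_setIntegral ht.le htT]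
  calc c₁ * c₂ * (t / 2) * T ^ (2 * H T - 1)
      = c₁ * T ^ (2 * H T - 1) * c₂ * volume.real (Ioc (0 : ℝ) (t / 2)) := by
        rw [Real.volume_real_Ioc_of_le (by linarith), sub_zero]
        ring
    _ ≤ ∫ u in Ioc 0 (t / 2), KH H T u * KH H t u :=
        setIntegral_ge_of_const_le_real measurableSet_Ioc measure_Ioc_lt_top.ne hlow
          (hint.mono_set (Ioc_subset_Ioc_right (by linarith)))
    _ ≤ ∫ u in Ioc 0 t, KH H T u * KH H t u :=
        setIntegral_mono_set hint
          (by filter_upwards [ae_restrict_mem measurableSet_Ioc] with u hu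
              exact mul_nonneg (KH_nonneg H T hu.1.le) (KH_nonneg H t hu.1.le))
          (Ioc_subset_Ioc_right (by linarith)).eventuallyLE

end Asymptotics

theorem RH_asymptotic_h_to_infty_general (a b : ℝ) (ha : 1 / 2 < a) (hb : b < 1)
    (H : ℝ → ℝ) (hH : ∀ t, 0 ≤ t → H t ∈ Set.Icc a b)
    (t : ℝ) (ht : 0 < t) :
    ∃ c C h₀ : ℝ, 0 < c ∧ c < C ∧ 0 < h₀ ∧ ∀ h : ℝ, h₀ ≤ h →
      c * (t + h) ^ (2 * H (t + h) - 1) ≤ RH H (t + h) t ∧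
        RH H (t + h) t ≤ C * (t + h) ^ (2 * H (t + h) - 1) := by
  obtain ⟨c, hc, hlow⟩ := exists_pos_le_RH ha hb ht (hH t ht.le)
  obtain ⟨C, hup⟩ := exists_RH_le ha hb ht (hH t ht.le)
  refine ⟨c, max C (c + 1), t, hc, by simp, ht, fun h hh => ⟨?_, ?_⟩⟩
  · exact hlow _ (by linarith) (hH _ (by linarith))
  · refine (hup _ (by linarith) (hH _ (by linarith))).trans ?_
    exact mul_le_mul_of_nonneg_right (le_max_left _ _) (Real.rpow_nonneg (by linarith) _)

/-- for fixed `t > 0`, `R_H(t+h,t)` is of the exact order `(t+h)^{2H_{t+h}−1}`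
as `h → ∞`. -/
theorem RH_asymptotic_h_to_infty (a b : ℝ) (ha : 1 / 2 < a) (hab : a ≤ b) (hb : b < 1)
    (H : ℝ → ℝ) (hmeas : Measurable H) (hH : ∀ t, 0 ≤ t → H t ∈ Set.Icc a b)
    (t : ℝ) (ht : 0 < t) :
    ∃ c C h₀ : ℝ, 0 < c ∧ c < C ∧ 0 < h₀ ∧ ∀ h : ℝ, h₀ ≤ h →
      c * (t + h) ^ (2 * H (t + h) - 1) ≤ RH H (t + h) t ∧
        RH H (t + h) t ≤ C * (t + h) ^ (2 * H (t + h) - 1) :=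
  RH_asymptotic_h_to_infty_general a b ha hb H hH t ht
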